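/- Let G be a finitely generated group, X a real Banach space, and V ⊆ X* a subspace. Let K ⊆ ℓ∞(G, X) be a nonempty, bounded, ℓ∞(G)-convex subset that is compact in the ultra-weak topology induced by V, let α be a G-affine action of G on K, and fix κ₀ ∈ K. Then there exists a point x₀ ∈ K such that for every map T : K → ℓ∞(G) that is ℓ∞(G)-convex and continuous from the ultra-weak topology on K to the weak-* topology of ℓ∞(G), one has T(x₀) = E(f_{[T]}); explicitly, (T(x₀))(g) = (T(α_g(κ₀)))(g) for every g ∈ G. -/

import Mathlib

open scoped ENNReal
set_option linter.unusedSectionVars false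

noncomputable section

variable {G : Type*} [Group G]
variable {X : Type*} [NormedAddCommGroup X] [NormedSpace ℝ X]

/-- Build an element of `ℓ∞(G, Z)` from a uniformly bounded function. -/
def linfElem {Z : Type*} [NormedAddCommGroup Z] (f : G → Z) (C : ℝ) (h : ∀ g, ‖f g‖ ≤ C) :
    lp (fun _ : G => Z) ∞ :=
  ⟨f, memℓp_infty ⟨C, by rintro r ⟨g, rfl⟩; exact h g⟩⟩

@[simp] lemma linfElem_apply {Z : Type*} [NormedAddCommGroup Z] (f : G → Z) (C : ℝ)
    (h : ∀ g, ‖f g‖ ≤ C) (g : G) : linfElem f C h g = f g := rfl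

/-- The action `•` of `ℓ∞(G)` on `ℓ∞(G, Z)`: `(a • f)_g = a_g f_g`. -/
def bullet {Z : Type*} [NormedAddCommGroup Z] [NormedSpace ℝ Z]
    (a : lp (fun _ : G => ℝ) ∞) (f : lp (fun _ : G => Z) ∞) :
    lp (fun _ : G => Z) ∞ :=
  linfElem (fun g => a g • f g) (‖a‖ * ‖f‖) (by
    intro g
    rw [norm_smul]
    exact mul_le_mul (lp.norm_apply_le_norm ENNReal.top_ne_zero a g)
      (lp.norm_apply_le_norm ENNReal.top_ne_zero f g) (norm_nonneg _) (norm_nonneg _))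

/-- The translation action of `G` on `ℓ∞(G)`: `(g * a)_h = a_{g⁻¹ h}`. -/
def gstar (g : G) (a : lp (fun _ : G => ℝ) ∞) : lp (fun _ : G => ℝ) ∞ :=
  linfElem (fun h => a (g⁻¹ * h)) ‖a‖
    (fun h => lp.norm_apply_le_norm ENNReal.top_ne_zero a _)

/-- A set `K ⊆ ℓ∞(G, X)` is `ℓ∞(G)`-convex if it is stable under combinations
`∑ aᵢ • xᵢ` with `aᵢ ∈ ℓ∞(G)` nonnegative, `∑ aᵢ = 1_G` and `xᵢ ∈ K`. -/
def LinfConvex (K : Set (lp (fun _ : G => X) ∞)) : Prop :=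
  ∀ (n : ℕ) (a : Fin n → lp (fun _ : G => ℝ) ∞) (x : Fin n → lp (fun _ : G => X) ∞),
    (∀ (i : Fin n) (h : G), 0 ≤ a i h) → (∀ h : G, ∑ i, a i h = 1) →
    (∀ i, x i ∈ K) → (∑ i, bullet (a i) (x i)) ∈ K

/-- A family of maps `α_g : K → K` is a `G`-affine action if `α_e = id`,
`α_{gh} = α_g ∘ α_h`, and `α_g (a • x + b • y) = (g * a) • α_g x + (g * b) • α_g y`
for all nonnegative `a, b ∈ ℓ∞(G)` with `a + b = 1_G`. -/
def IsGAffineAction (K : Set (lp (fun _ : G => X) ∞)) (α : G → K → K) : Prop :=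
  (∀ x : K, α 1 x = x) ∧
  (∀ (g h : G) (x : K), α (g * h) x = α g (α h x)) ∧
  (∀ (g : G) (a b : lp (fun _ : G => ℝ) ∞),
    (∀ h : G, 0 ≤ a h) → (∀ h : G, 0 ≤ b h) → (∀ h : G, a h + b h = 1) →
    ∀ x y z : K, (z : lp (fun _ : G => X) ∞) = bullet a ↑x + bullet b ↑y →
      (α g z : lp (fun _ : G => X) ∞) =
        bullet (gstar g a) ↑(α g x) + bullet (gstar g b) ↑(α g y))

/-- A map `T : K → ℓ∞(G)` is `ℓ∞(G)`-convex if `T (a • x + b • y) = a • T x + b • T y`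
for all nonnegative `a, b ∈ ℓ∞(G)` with `a + b = 1_G`. -/
def IsLinfConvexMap (K : Set (lp (fun _ : G => X) ∞)) (T : K → lp (fun _ : G => ℝ) ∞) :
    Prop :=
  ∀ (a b : lp (fun _ : G => ℝ) ∞),
    (∀ h : G, 0 ≤ a h) → (∀ h : G, 0 ≤ b h) → (∀ h : G, a h + b h = 1) →
    ∀ x y z : K, (z : lp (fun _ : G => X) ∞) = bullet a ↑x + bullet b ↑y →
      T z = bullet a (T x) + bullet b (T y)

/-- The action of `G` on maps `T : K → ℓ∞(G)`: `(g · T)(x) = g * (T (α_{g⁻¹} x))`. -/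
def dotT (K : Set (lp (fun _ : G => X) ∞)) (α : G → K → K) (g : G)
    (T : K → lp (fun _ : G => ℝ) ∞) : K → lp (fun _ : G => ℝ) ∞ :=
  fun x => gstar g (T (α g⁻¹ x))

end

section topologies

variable (G : Type*) [Group G]
variable (X : Type*) [NormedAddCommGroup X] [NormedSpace ℝ X]

/-- The weak-* topology on `ℓ∞(G)` as the dual of `ℓ₁(G)`: the coarsest topology making
`b ↦ ∑_g a_g b_g` continuous for every `a ∈ ℓ₁(G)`. -/
noncomputable def wstarLinf : TopologicalSpace (lp (fun _ : G => ℝ) ∞) :=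
  ⨅ a : lp (fun _ : G => ℝ) 1,
    TopologicalSpace.induced (fun b : lp (fun _ : G => ℝ) ∞ => ∑' g : G, a g * b g)
      inferInstance

/-- The ultra-weak topology on `ℓ∞(G, X)` induced by a subspace `V ⊆ X*`: the coarsest
topology making each `T_φ : ℓ∞(G, X) → ℓ∞(G)`, `(T_φ f)(g) = φ(f_g)`, continuous for
`φ ∈ V`, with `ℓ∞(G)` carrying its weak-* topology as the dual of `ℓ₁(G)`; equivalently,
the coarsest topology making `f ↦ ∑_g a_g φ(f_g)` continuous for all `φ ∈ V`,
`a ∈ ℓ₁(G)`. -/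
noncomputable def ultraweak (V : Submodule ℝ (X →L[ℝ] ℝ)) :
    TopologicalSpace (lp (fun _ : G => X) ∞) :=
  ⨅ (φ : V) (a : lp (fun _ : G => ℝ) 1),
    TopologicalSpace.induced
      (fun f : lp (fun _ : G => X) ∞ => ∑' g : G, a g * (φ : X →L[ℝ] ℝ) (f g))
      inferInstance

end topologies

/-!
Since `K` is `ℓ∞(G)`-convex, gluing with indicator functions gives, for every finite `F ⊆ G`,
a point of `K` agreeing with `α_g κ₀` at each `g ∈ F`; let `x₀` be a cluster point of these
points as `F` grows. An `ℓ∞(G)`-convex map `T` is local: if `z g = x g` then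
`z = 1_{g} • x + 1_{G ∖ {g}} • z`, so `(T z)(g) = (T x)(g)`. Hence `(T x_F)(g) = (T (α_g κ₀))(g)`
as soon as `g ∈ F`, and since evaluation at `g` is weak-* continuous this passes to `x₀`.
-/

noncomputable section indicator

variable {G : Type*} [Group G]
variable {Z : Type*} [NormedAddCommGroup Z] [NormedSpace ℝ Z]

def linfIndicator (s : Set G) : lp (fun _ : G => ℝ) ∞ :=
  linfElem (s.indicator 1) 1 fun g => by
    simpa using norm_indicator_le_norm_self (1 : G → ℝ) g (s := s)

lemma linfIndicator_nonneg (s : Set G) (g : G) : 0 ≤ linfIndicator s g :=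
  Set.indicator_nonneg (fun _ _ => zero_le_one) g

lemma linfIndicator_add_compl (s : Set G) (g : G) :
    linfIndicator s g + linfIndicator sᶜ g = 1 :=
  Set.indicator_self_add_compl_apply s 1 g

def linfPiecewise (s : Set G) (x y : lp (fun _ : G => Z) ∞) : lp (fun _ : G => Z) ∞ :=
  bullet (linfIndicator s) x + bullet (linfIndicator sᶜ) y

open scoped Classical in
lemma linfPiecewise_apply (s : Set G) (x y : lp (fun _ : G => Z) ∞) (g : G) :
    linfPiecewise s x y g = if g ∈ s then x g else y g := by
  by_cases hg : g ∈ s <;>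
    simp [linfPiecewise, bullet, linfIndicator, hg]

end indicator

section convexity

variable {G : Type*} [Group G]
variable {X : Type*} [NormedAddCommGroup X] [NormedSpace ℝ X]
variable {K : Set (lp (fun _ : G => X) ∞)}

lemma LinfConvex.linfPiecewise_mem (hK : LinfConvex K) (s : Set G)
    {x y : lp (fun _ : G => X) ∞} (hx : x ∈ K) (hy : y ∈ K) : linfPiecewise s x y ∈ K := by
  simpa [linfPiecewise, Fin.sum_univ_two] using
    hK 2 ![linfIndicator s, linfIndicator sᶜ] ![x, y]
      (fun i g => by fin_cases i <;> exact linfIndicator_nonneg _ g)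
      (fun g => by simpa [Fin.sum_univ_two] using linfIndicator_add_compl s g)
      (fun i => by fin_cases i <;> assumption)

lemma LinfConvex.exists_mem_forall_mem_apply_eq (hK : LinfConvex K)
    (x : G → lp (fun _ : G => X) ∞) (hx : ∀ g, x g ∈ K) (F : Finset G) :
    ∃ z ∈ K, ∀ g ∈ F, z g = x g g := by
  classical
  induction F using Finset.induction_on with
  | empty => exact ⟨x 1, hx 1, by simp⟩
  | insert g F _ ih =>
    obtain ⟨z, hzK, hz⟩ := ih
    refine ⟨linfPiecewise {g} (x g) z, hK.linfPiecewise_mem _ (hx g) hzK, ?_⟩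
    intro h hh
    rcases Finset.mem_insert.mp hh with rfl | hF
    · simp [linfPiecewise_apply]
    · by_cases hhg : h = g
      · subst hhg; simp [linfPiecewise_apply]
      · simp [linfPiecewise_apply, hhg, hz h hF]

lemma IsLinfConvexMap.apply_linfPiecewise {T : K → lp (fun _ : G => ℝ) ∞}
    (hT : IsLinfConvexMap K T) (s : Set G) (x y z : K)
    (hz : (z : lp (fun _ : G => X) ∞) = linfPiecewise s x y) :
    T z = linfPiecewise s (T x) (T y) :=
  hT _ _ (linfIndicator_nonneg s) (linfIndicator_nonneg sᶜ) (linfIndicator_add_compl s)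
    x y z hz

lemma IsLinfConvexMap.apply_apply_eq_of_apply_eq {T : K → lp (fun _ : G => ℝ) ∞}
    (hT : IsLinfConvexMap K T) {x z : K} {g : G}
    (hxz : (z : lp (fun _ : G => X) ∞) g = (x : lp (fun _ : G => X) ∞) g) :
    T z g = T x g := by
  classical
  have hz : (z : lp (fun _ : G => X) ∞) = linfPiecewise {g} x z := by
    refine lp.ext (funext fun h => ?_)
    by_cases hhg : h = g
    · subst hhg; simp [linfPiecewise_apply, hxz]
    · simp [linfPiecewise_apply, hhg]
  simpa [linfPiecewise_apply] using congr($(hT.apply_linfPiecewise {g} x z z hz) g)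

end convexity

lemma continuous_apply_wstarLinf {G : Type*} [Group G] (g : G) :
    @Continuous _ _ (wstarLinf G) _ (fun b : lp (fun _ : G => ℝ) ∞ => b g) := by
  classical
  have hsum : (fun b : lp (fun _ : G => ℝ) ∞ => b g) =
      fun b => ∑' h : G, lp.single (E := fun _ : G => ℝ) 1 g 1 h * b h := by
    funext b
    rw [tsum_eq_single g fun h hh => by simp [hh]]
    simp
  rw [hsum, wstarLinf]
  exact continuous_iInf_dom continuous_induced_dom

theorem exists_barycenter_general
    {G : Type*} [Group G]
    {X : Type*} [NormedAddCommGroup X] [NormedSpace ℝ X]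
    (V : Submodule ℝ (X →L[ℝ] ℝ))
    (K : Set (lp (fun _ : G => X) ∞))
    (hconv : LinfConvex K)
    (hcpt : @IsCompact _ (ultraweak G X V) K)
    (α : G → K → K) (κ₀ : K) :
    ∃ x₀ : K, ∀ T : K → lp (fun _ : G => ℝ) ∞,
      IsLinfConvexMap K T →
      @Continuous _ _ (TopologicalSpace.induced Subtype.val (ultraweak G X V))
        (wstarLinf G) T →
      ∀ g : G, T x₀ g = T (α g κ₀) g := by
  let _ : TopologicalSpace (lp (fun _ : G => X) ∞) := ultraweak G X V
  choose patch hpatchK hpatch using fun F : Finset G =>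
    hconv.exists_mem_forall_mem_apply_eq (fun g => α g κ₀) (fun g => (α g κ₀).2) F
  have : CompactSpace K := isCompact_iff_compactSpace.mp hcpt
  obtain ⟨x₀, -, hx₀⟩ := isCompact_univ.exists_mapClusterPt (f := Filter.atTop)
    (u := fun F => (⟨patch F, hpatchK F⟩ : K)) (by simp)
  refine ⟨x₀, fun T hT hTcont g => ?_⟩
  have hφ : Continuous fun x : K => T x g :=
    @Continuous.comp K _ ℝ _ (wstarLinf G) _ T _ (continuous_apply_wstarLinf g) hTcont
  have hev : ∀ᶠ F in Filter.atTop, T ⟨patch F, hpatchK F⟩ g ∈ ({T (α g κ₀) g} : Set ℝ) := by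
    filter_upwards [Filter.eventually_ge_atTop {g}] with F hF
    exact hT.apply_apply_eq_of_apply_eq (hpatch F g (hF (Finset.mem_singleton_self g)))
  exact (isClosed_singleton.preimage hφ).mem_of_mapClusterPt hx₀ hev

/-- **A barycenter for the weak invariant expectation.**  Let `G` be a finitely generated
group, `X` a real Banach space, `V ⊆ X*` a subspace, and `K ⊆ ℓ∞(G, X)` a nonempty,
bounded, `ℓ∞(G)`-convex subset which is compact in the ultra-weak topology induced by
`V`.  Let `α` be a `G`-affine action of `G` on `K` and fix `κ₀ ∈ K`.  Then there exists
`x₀ ∈ K` such that for every `ℓ∞(G)`-convex map `T : K → ℓ∞(G)` which is continuous from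
the ultra-weak topology on `K` to the weak-* topology of `ℓ∞(G)`, one has
`T x₀ = E (f_{[T]})`, i.e. `(T x₀)(g) = (T (α_g κ₀))(g)` for all `g ∈ G`. -/
theorem exists_barycenter
    {G : Type*} [Group G] [Group.FG G]
    {X : Type*} [NormedAddCommGroup X] [NormedSpace ℝ X] [CompleteSpace X]
    (V : Submodule ℝ (X →L[ℝ] ℝ))
    (K : Set (lp (fun _ : G => X) ∞))
    (hne : K.Nonempty)
    (hbdd : ∃ C : ℝ, ∀ f ∈ K, ‖f‖ ≤ C)
    (hconv : LinfConvex K)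
    (hcpt : @IsCompact _ (ultraweak G X V) K)
    (α : G → K → K) (hα : IsGAffineAction K α) (κ₀ : K) :
    ∃ x₀ : K, ∀ T : K → lp (fun _ : G => ℝ) ∞,
      IsLinfConvexMap K T →
      @Continuous _ _ (TopologicalSpace.induced Subtype.val (ultraweak G X V))
        (wstarLinf G) T →
      ∀ g : G, T x₀ g = T (α g κ₀) g :=
  exists_barycenter_general V K hconv hcpt α κ₀
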